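/- (Cauchy invariants) Let x : ℝ³ × ℝ → ℝ³ be smooth with x(a,0) = a, and suppose that for all (a,t), ∇ᴸ × (∑ₖ ẍₖ(a,t) ∇ᴸ xₖ(a,t)) = 0. Then for all (a,t), ∑ₖ ∇ᴸ ẋₖ(a,t) × ∇ᴸ xₖ(a,t) = ω₀(a), where ω₀ = ∇ × v₀ is the curl of the initial velocity v₀(a) = ẋ(a,0). -/

import Mathlib

open Matrix MeasureTheory intervalIntegral Asymptotics
open scoped Topology

noncomputable section

/-- Points of `ℝ³`. -/
abbrev V3 := Fin 3 → ℝ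

/-- Partial derivative in direction `i` of a scalar function on `ℝ³`. -/
noncomputable def pd (i : Fin 3) (f : V3 → ℝ) (a : V3) : ℝ :=
  fderiv ℝ f a (Pi.single i 1)

/-- Gradient of a scalar function on `ℝ³`. -/
noncomputable def grad3 (f : V3 → ℝ) (a : V3) : V3 := fun i => pd i f a

/-- Curl of a vector field on `ℝ³`. -/
noncomputable def curl3 (F : V3 → V3) (a : V3) : V3 :=
  ![pd 1 (fun b => F b 2) a - pd 2 (fun b => F b 1) a,
    pd 2 (fun b => F b 0) a - pd 0 (fun b => F b 2) a,
    pd 0 (fun b => F b 1) a - pd 1 (fun b => F b 0) a]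

/-- Divergence of a vector field on `ℝ³`. -/
noncomputable def div3 (F : V3 → V3) (a : V3) : ℝ :=
  ∑ i, pd i (fun b => F b i) a

/-- Lagrangian time derivative `ẋ(a,t)`. -/
noncomputable def tder (x : V3 × ℝ → V3) (a : V3) (t : ℝ) : V3 :=
  deriv (fun s => x (a, s)) t

/-- Second Lagrangian time derivative `ẍ(a,t)`. -/
noncomputable def tder2 (x : V3 × ℝ → V3) (a : V3) (t : ℝ) : V3 :=
  deriv (fun s => tder x a s) t

/-- Jacobian matrix `∂xᵢ/∂aⱼ` of a map `ℝ³ → ℝ³`. -/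
noncomputable def jacobian (x : V3 → V3) (a : V3) : Matrix (Fin 3) (Fin 3) ℝ :=
  Matrix.of fun i j => pd j (fun b => x b i) a

namespace CauchyAux

/-- Directional derivative on `ℝ³ × ℝ`. -/
noncomputable def Dd (v : V3 × ℝ) (f : V3 × ℝ → ℝ) : V3 × ℝ → ℝ := fun p => fderiv ℝ f p v

lemma Dd_contDiff {f : V3 × ℝ → ℝ} (hf : ContDiff ℝ (⊤ : ℕ∞) f) (v : V3 × ℝ) :
    ContDiff ℝ (⊤ : ℕ∞) (Dd v f) := (hf.fderiv_right (by simp)).clm_apply contDiff_const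

lemma Dd_second {f : V3 × ℝ → ℝ} (hf : ContDiff ℝ (⊤ : ℕ∞) f) (v w : V3 × ℝ) (p : V3 × ℝ) :
    Dd v (Dd w f) p = fderiv ℝ (fderiv ℝ f) p v w := by
  have hc : DifferentiableAt ℝ (fderiv ℝ f) p :=
    ((hf.fderiv_right (m := (⊤ : ℕ∞)) (by simp)).differentiable (by simp)).differentiableAt
  have h : Dd v (Dd w f) p = fderiv ℝ (fun q => fderiv ℝ f q w) p v := rfl
  rw [h, fderiv_clm_apply hc (differentiableAt_const w)]
  simp

lemma Dd_comm {f : V3 × ℝ → ℝ} (hf : ContDiff ℝ (⊤ : ℕ∞) f) (v w : V3 × ℝ) (p : V3 × ℝ) :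
    Dd v (Dd w f) p = Dd w (Dd v f) p := by
  rw [Dd_second hf, Dd_second hf]
  exact (hf.contDiffAt.isSymmSndFDerivAt (by rw [minSmoothness_of_isRCLikeNormedField]; exact WithTop.coe_le_coe.2 le_top)) v w

/-- spatial basis directions -/
noncomputable def ee (i : Fin 3) : V3 × ℝ := ((Pi.single i 1 : V3), (0 : ℝ))
/-- time direction -/
noncomputable def et : V3 × ℝ := ((0 : V3), (1 : ℝ))

lemma pd_eq_Dd {g : V3 × ℝ → ℝ} (hg : ContDiff ℝ (⊤ : ℕ∞) g) (i : Fin 3) (a : V3) (t : ℝ) :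
    pd i (fun b => g (b, t)) a = Dd (ee i) g (a, t) := by
  have h1 : HasFDerivAt (fun b : V3 => (b, t)) ((ContinuousLinearMap.id ℝ V3).prod 0) a :=
    (hasFDerivAt_id a).prodMk (hasFDerivAt_const t a)
  have h2 := ((hg.differentiable (by simp)) (a, t)).hasFDerivAt.comp a h1
  have h3 : (fun b => g (b, t)) = g ∘ (fun b : V3 => (b, t)) := rfl
  rw [pd, h3, h2.fderiv]
  rfl

lemma hasDerivAt_slice {g : V3 × ℝ → ℝ} (hg : ContDiff ℝ (⊤ : ℕ∞) g) (a : V3) (t : ℝ) :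
    HasDerivAt (fun s => g (a, s)) (Dd et g (a, t)) t := by
  have h1 : HasDerivAt (fun s : ℝ => ((a : V3), s)) (((0 : V3), (1 : ℝ))) t :=
    (hasDerivAt_const t a).prodMk (hasDerivAt_id t)
  exact (((hg.differentiable (by simp)) (a, t)).hasFDerivAt).comp_hasDerivAt t h1

lemma Dd_sum_mul {A B : Fin 3 → V3 × ℝ → ℝ} (hA : ∀ k, ContDiff ℝ (⊤ : ℕ∞) (A k))
    (hB : ∀ k, ContDiff ℝ (⊤ : ℕ∞) (B k)) (v : V3 × ℝ) (p : V3 × ℝ) :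
    Dd v (fun q => ∑ k : Fin 3, A k q * B k q) p
      = ∑ k : Fin 3, (Dd v (A k) p * B k p + A k p * Dd v (B k) p) := by
  have h : Dd v (fun q => ∑ k : Fin 3, A k q * B k q) p
      = fderiv ℝ (fun q => ∑ k : Fin 3, A k q * B k q) p v := rfl
  rw [h, fderiv_fun_sum (A := fun k q => A k q * B k q) (fun k _ =>
    (((hA k).differentiable (by simp)).differentiableAt).mul
      (((hB k).differentiable (by simp)).differentiableAt) :
    ∀ k ∈ Finset.univ, DifferentiableAt ℝ (fun q => A k q * B k q) p)]
  rw [ContinuousLinearMap.sum_apply]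
  refine Finset.sum_congr rfl fun k _ => ?_
  rw [fderiv_fun_mul (((hA k).differentiable (by simp)).differentiableAt)
    (((hB k).differentiable (by simp)).differentiableAt)]
  simp [Dd]
  ring

/-- components of the flow map -/
noncomputable def Xc (x : V3 × ℝ → V3) (k : Fin 3) : V3 × ℝ → ℝ := fun p => x p k
/-- components of the velocity -/
noncomputable def Wc (x : V3 × ℝ → V3) (k : Fin 3) : V3 × ℝ → ℝ := Dd et (Xc x k)
/-- components of the acceleration -/
noncomputable def Ac (x : V3 × ℝ → V3) (k : Fin 3) : V3 × ℝ → ℝ := Dd et (Wc x k)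

end CauchyAux

open CauchyAux

/-- Cauchy invariants: if `∇ᴸ × (∑ₖ ẍₖ ∇ᴸxₖ) = 0` and `x(·,0) = id`,
then `∑ₖ ∇ᴸẋₖ × ∇ᴸxₖ = ω₀ = ∇ × v₀` for all times. -/
theorem cauchy_invariants
    (x : V3 × ℝ → V3) (hx : ContDiff ℝ (⊤ : ℕ∞) x) (hx0 : ∀ a, x (a, 0) = a)
    (hcurl : ∀ (a : V3) (t : ℝ),
      curl3 (fun b => ∑ k : Fin 3, tder2 x b t k • grad3 (fun c => x (c, t) k) b) a = 0) :
    ∀ (a : V3) (t : ℝ),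
      (∑ k : Fin 3,
          crossProduct (grad3 (fun b => tder x b t k) a) (grad3 (fun b => x (b, t) k) a))
        = curl3 (fun b => tder x b 0) a := by
  have hX : ∀ k, ContDiff ℝ (⊤ : ℕ∞) (Xc x k) := fun k => contDiff_pi.mp hx k
  have hW : ∀ k, ContDiff ℝ (⊤ : ℕ∞) (Wc x k) := fun k => Dd_contDiff (hX k) et
  have hA : ∀ k, ContDiff ℝ (⊤ : ℕ∞) (Ac x k) := fun k => Dd_contDiff (hW k) et
  -- time derivatives as directional derivatives
  have htder : ∀ (b : V3) (s : ℝ), tder x b s = fun k => Wc x k (b, s) := by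
    intro b s
    have hD : HasDerivAt (fun r => x (b, r)) (fun k => Wc x k (b, s)) s :=
      hasDerivAt_pi.mpr fun k => hasDerivAt_slice (hX k) b s
    exact hD.deriv
  have htder2 : ∀ (b : V3) (s : ℝ), tder2 x b s = fun k => Ac x k (b, s) := by
    intro b s
    have heq : (fun r => tder x b r) = fun r => (fun k => Wc x k (b, r)) :=
      funext fun r => htder b r
    have hD : HasDerivAt (fun r => (fun k => Wc x k (b, r))) (fun k => Ac x k (b, s)) s :=
      hasDerivAt_pi.mpr fun k => hasDerivAt_slice (hW k) b s
    show deriv (fun r => tder x b r) s = _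
    rw [heq]
    exact hD.deriv
  -- gradients as directional derivatives
  have hgX : ∀ (b : V3) (s : ℝ) (k i : Fin 3),
      grad3 (fun c => x (c, s) k) b i = Dd (ee i) (Xc x k) (b, s) :=
    fun b s k i => pd_eq_Dd (hX k) i b s
  have hgW : ∀ (b : V3) (s : ℝ) (k i : Fin 3),
      grad3 (fun c => tder x c s k) b i = Dd (ee i) (Wc x k) (b, s) := by
    intro b s k i
    have h1 : (fun c => tder x c s k) = fun c => Wc x k (c, s) :=
      funext fun c => by rw [htder c s]
    show pd i (fun c => tder x c s k) b = _
    rw [h1]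
    exact pd_eq_Dd (hW k) i b s
  -- smoothness of the force-like fields
  have hPhi : ∀ j : Fin 3, ContDiff ℝ (⊤ : ℕ∞)
      (fun p => ∑ k : Fin 3, Ac x k p * Dd (ee j) (Xc x k) p) :=
    fun j => ContDiff.sum fun k _ => (hA k).mul (Dd_contDiff (hX k) (ee j))
  -- hcurl components as statements about Dd
  have hpair : ∀ (i j : Fin 3) (b : V3) (s : ℝ),
      pd i (fun c => (∑ k : Fin 3, tder2 x c s k • grad3 (fun d => x (d, s) k) c) j) b
        = ∑ k : Fin 3, (Dd (ee i) (Ac x k) (b, s) * Dd (ee j) (Xc x k) (b, s)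
            + Ac x k (b, s) * Dd (ee i) (Dd (ee j) (Xc x k)) (b, s)) := by
    intro i j b s
    have h1 : (fun c => (∑ k : Fin 3, tder2 x c s k • grad3 (fun d => x (d, s) k) c) j)
        = fun c => ∑ k : Fin 3, Ac x k (c, s) * Dd (ee j) (Xc x k) (c, s) := by
      funext c
      simp only [Finset.sum_apply, Pi.smul_apply, smul_eq_mul, htder2, hgX]
    rw [h1]
    have h2 : pd i (fun c => ∑ k : Fin 3, Ac x k (c, s) * Dd (ee j) (Xc x k) (c, s)) b
        = Dd (ee i) (fun p => ∑ k : Fin 3, Ac x k p * Dd (ee j) (Xc x k) p) (b, s) :=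
      pd_eq_Dd (hPhi j) i b s
    rw [h2]
    exact Dd_sum_mul hA (fun k => Dd_contDiff (hX k) (ee j)) (ee i) (b, s)
  have hsub : ∀ (i j : Fin 3) (b : V3) (s : ℝ),
      pd i (fun c => (∑ k : Fin 3, tder2 x c s k • grad3 (fun d => x (d, s) k) c) j) b
        - pd j (fun c => (∑ k : Fin 3, tder2 x c s k • grad3 (fun d => x (d, s) k) c) i) b
        = ∑ k : Fin 3, (Dd (ee i) (Ac x k) (b, s) * Dd (ee j) (Xc x k) (b, s)
            - Dd (ee j) (Ac x k) (b, s) * Dd (ee i) (Xc x k) (b, s)) := by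
    intro i j b s
    rw [hpair i j b s, hpair j i b s, ← Finset.sum_sub_distrib]
    refine Finset.sum_congr rfl fun k _ => ?_
    rw [Dd_comm (hX k) (ee i) (ee j)]
    ring
  have hzero : ∀ (i j : Fin 3),
      ((i = 1 ∧ j = 2) ∨ (i = 2 ∧ j = 0) ∨ (i = 0 ∧ j = 1)) → ∀ (b : V3) (s : ℝ),
      ∑ k : Fin 3, (Dd (ee i) (Ac x k) (b, s) * Dd (ee j) (Xc x k) (b, s)
          - Dd (ee j) (Ac x k) (b, s) * Dd (ee i) (Xc x k) (b, s)) = 0 := by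
    intro i j hij b s
    rw [← hsub i j b s]
    rcases hij with ⟨hi, hj⟩ | ⟨hi, hj⟩ | ⟨hi, hj⟩ <;> subst hi <;> subst hj
    · have h0 := congrFun (hcurl b s) 0
      simpa [curl3] using h0
    · have h0 := congrFun (hcurl b s) 1
      simpa [curl3] using h0
    · have h0 := congrFun (hcurl b s) 2
      simpa [curl3] using h0
  intro a t
  -- the Cauchy invariant is constant in time
  have hG : ∀ (i j : Fin 3),
      (∀ (b : V3) (s : ℝ),
        ∑ k : Fin 3, (Dd (ee i) (Ac x k) (b, s) * Dd (ee j) (Xc x k) (b, s)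
            - Dd (ee j) (Ac x k) (b, s) * Dd (ee i) (Xc x k) (b, s)) = 0) →
      ∀ s : ℝ,
      (∑ k : Fin 3, (Dd (ee i) (Wc x k) (a, s) * Dd (ee j) (Xc x k) (a, s)
          - Dd (ee j) (Wc x k) (a, s) * Dd (ee i) (Xc x k) (a, s)))
        = ∑ k : Fin 3, (Dd (ee i) (Wc x k) (a, 0) * Dd (ee j) (Xc x k) (a, 0)
          - Dd (ee j) (Wc x k) (a, 0) * Dd (ee i) (Xc x k) (a, 0)) := by
    intro i j hz s
    have hder : ∀ u : ℝ, HasDerivAt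
        (fun r => ∑ k : Fin 3, (Dd (ee i) (Wc x k) (a, r) * Dd (ee j) (Xc x k) (a, r)
            - Dd (ee j) (Wc x k) (a, r) * Dd (ee i) (Xc x k) (a, r))) 0 u := by
      intro u
      have h1 : HasDerivAt
          (fun r => ∑ k : Fin 3, (Dd (ee i) (Wc x k) (a, r) * Dd (ee j) (Xc x k) (a, r)
              - Dd (ee j) (Wc x k) (a, r) * Dd (ee i) (Xc x k) (a, r)))
          (∑ k : Fin 3,
            ((Dd et (Dd (ee i) (Wc x k)) (a, u) * Dd (ee j) (Xc x k) (a, u)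
              + Dd (ee i) (Wc x k) (a, u) * Dd et (Dd (ee j) (Xc x k)) (a, u))
            - (Dd et (Dd (ee j) (Wc x k)) (a, u) * Dd (ee i) (Xc x k) (a, u)
              + Dd (ee j) (Wc x k) (a, u) * Dd et (Dd (ee i) (Xc x k)) (a, u)))) u := by
        apply HasDerivAt.fun_sum
        intro k _
        exact ((hasDerivAt_slice (Dd_contDiff (hW k) (ee i)) a u).mul
            (hasDerivAt_slice (Dd_contDiff (hX k) (ee j)) a u)).sub
          ((hasDerivAt_slice (Dd_contDiff (hW k) (ee j)) a u).mul
            (hasDerivAt_slice (Dd_contDiff (hX k) (ee i)) a u))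
      have h2 : (∑ k : Fin 3,
            ((Dd et (Dd (ee i) (Wc x k)) (a, u) * Dd (ee j) (Xc x k) (a, u)
              + Dd (ee i) (Wc x k) (a, u) * Dd et (Dd (ee j) (Xc x k)) (a, u))
            - (Dd et (Dd (ee j) (Wc x k)) (a, u) * Dd (ee i) (Xc x k) (a, u)
              + Dd (ee j) (Wc x k) (a, u) * Dd et (Dd (ee i) (Xc x k)) (a, u)))) = 0 := by
        have h3 : (∑ k : Fin 3,
              ((Dd et (Dd (ee i) (Wc x k)) (a, u) * Dd (ee j) (Xc x k) (a, u)
                + Dd (ee i) (Wc x k) (a, u) * Dd et (Dd (ee j) (Xc x k)) (a, u))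
              - (Dd et (Dd (ee j) (Wc x k)) (a, u) * Dd (ee i) (Xc x k) (a, u)
                + Dd (ee j) (Wc x k) (a, u) * Dd et (Dd (ee i) (Xc x k)) (a, u))))
            = ∑ k : Fin 3, (Dd (ee i) (Ac x k) (a, u) * Dd (ee j) (Xc x k) (a, u)
              - Dd (ee j) (Ac x k) (a, u) * Dd (ee i) (Xc x k) (a, u)) := by
          refine Finset.sum_congr rfl fun k _ => ?_
          rw [Dd_comm (hW k) et (ee i), Dd_comm (hW k) et (ee j),
            Dd_comm (hX k) et (ee i), Dd_comm (hX k) et (ee j)]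
          show Dd (ee i) (Ac x k) (a, u) * Dd (ee j) (Xc x k) (a, u)
              + Dd (ee i) (Wc x k) (a, u) * Dd (ee j) (Wc x k) (a, u)
            - (Dd (ee j) (Ac x k) (a, u) * Dd (ee i) (Xc x k) (a, u)
              + Dd (ee j) (Wc x k) (a, u) * Dd (ee i) (Wc x k) (a, u)) = _
          ring
        rw [h3]
        exact hz a u
      rw [h2] at h1
      exact h1
    have hconst := is_const_of_deriv_eq_zero
      (fun u => (hder u).differentiableAt) (fun u => (hder u).deriv) s 0
    simpa using hconst
  -- values at time 0
  have hX0 : ∀ (k j : Fin 3), Dd (ee j) (Xc x k) (a, 0) = if k = j then 1 else 0 := by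
    intro k j
    rw [← pd_eq_Dd (hX k) j a 0]
    have h1 : (fun b => Xc x k (b, 0)) = fun b : V3 => b k := by
      funext b
      show x (b, 0) k = b k
      rw [hx0 b]
    rw [h1]
    show fderiv ℝ (fun b : V3 => b k) a (Pi.single j 1) = _
    have h2 : (fun b : V3 => b k) = (ContinuousLinearMap.proj k : V3 →L[ℝ] ℝ) := rfl
    rw [h2, ContinuousLinearMap.fderiv]
    simp [Pi.single_apply]
  have hpdW0 : ∀ (i k : Fin 3),
      pd i (fun b => tder x b 0 k) a = Dd (ee i) (Wc x k) (a, 0) :=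
    fun i k => hgW a 0 k i
  -- assemble
  funext c
  rw [Finset.sum_apply]
  fin_cases c
  · -- component 0
    show (∑ k : Fin 3, (crossProduct (grad3 (fun b => tder x b t k) a)
        (grad3 (fun b => x (b, t) k) a)) 0) = _
    have hL : (∑ k : Fin 3, (crossProduct (grad3 (fun b => tder x b t k) a)
        (grad3 (fun b => x (b, t) k) a)) 0)
        = ∑ k : Fin 3, (Dd (ee 1) (Wc x k) (a, t) * Dd (ee 2) (Xc x k) (a, t)
          - Dd (ee 2) (Wc x k) (a, t) * Dd (ee 1) (Xc x k) (a, t)) := by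
      refine Finset.sum_congr rfl fun k _ => ?_
      rw [cross_apply]
      simp only [Matrix.cons_val_zero]
      rw [hgW a t k 1, hgW a t k 2, hgX a t k 1, hgX a t k 2]
    rw [hL, hG 1 2 (hzero 1 2 (Or.inl ⟨rfl, rfl⟩)) t]
    simp only [hX0]
    rw [Fin.sum_univ_three]
    norm_num [show ((0:Fin 3) = 1) = False from by decide,
      show ((0:Fin 3) = 2) = False from by decide,
      show ((1:Fin 3) = 0) = False from by decide,
      show ((1:Fin 3) = 2) = False from by decide,
      show ((2:Fin 3) = 0) = False from by decide,
      show ((2:Fin 3) = 1) = False from by decide]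
    show _ = pd 1 (fun b => tder x b 0 2) a - pd 2 (fun b => tder x b 0 1) a
    rw [hpdW0 1 2, hpdW0 2 1]
    ring
  · -- component 1
    show (∑ k : Fin 3, (crossProduct (grad3 (fun b => tder x b t k) a)
        (grad3 (fun b => x (b, t) k) a)) 1) = _
    have hL : (∑ k : Fin 3, (crossProduct (grad3 (fun b => tder x b t k) a)
        (grad3 (fun b => x (b, t) k) a)) 1)
        = ∑ k : Fin 3, (Dd (ee 2) (Wc x k) (a, t) * Dd (ee 0) (Xc x k) (a, t)
          - Dd (ee 0) (Wc x k) (a, t) * Dd (ee 2) (Xc x k) (a, t)) := by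
      refine Finset.sum_congr rfl fun k _ => ?_
      rw [cross_apply]
      simp only [Matrix.cons_val_one, Matrix.head_cons, Matrix.cons_val_zero]
      rw [hgW a t k 0, hgW a t k 2, hgX a t k 0, hgX a t k 2]
    rw [hL, hG 2 0 (hzero 2 0 (Or.inr (Or.inl ⟨rfl, rfl⟩))) t]
    simp only [hX0]
    rw [Fin.sum_univ_three]
    norm_num [show ((0:Fin 3) = 1) = False from by decide,
      show ((0:Fin 3) = 2) = False from by decide,
      show ((1:Fin 3) = 0) = False from by decide,
      show ((1:Fin 3) = 2) = False from by decide,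
      show ((2:Fin 3) = 0) = False from by decide,
      show ((2:Fin 3) = 1) = False from by decide]
    show _ = pd 2 (fun b => tder x b 0 0) a - pd 0 (fun b => tder x b 0 2) a
    rw [hpdW0 2 0, hpdW0 0 2]
    ring
  · -- component 2
    show (∑ k : Fin 3, (crossProduct (grad3 (fun b => tder x b t k) a)
        (grad3 (fun b => x (b, t) k) a)) 2) = _
    have hL : (∑ k : Fin 3, (crossProduct (grad3 (fun b => tder x b t k) a)
        (grad3 (fun b => x (b, t) k) a)) 2)
        = ∑ k : Fin 3, (Dd (ee 0) (Wc x k) (a, t) * Dd (ee 1) (Xc x k) (a, t)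
          - Dd (ee 1) (Wc x k) (a, t) * Dd (ee 0) (Xc x k) (a, t)) := by
      refine Finset.sum_congr rfl fun k _ => ?_
      rw [cross_apply]
      simp only [Matrix.cons_val_two, Matrix.tail_cons, Matrix.head_cons]
      rw [hgW a t k 0, hgW a t k 1, hgX a t k 0, hgX a t k 1]
    rw [hL, hG 0 1 (hzero 0 1 (Or.inr (Or.inr ⟨rfl, rfl⟩))) t]
    simp only [hX0]
    rw [Fin.sum_univ_three]
    norm_num [show ((0:Fin 3) = 1) = False from by decide,
      show ((0:Fin 3) = 2) = False from by decide,
      show ((1:Fin 3) = 0) = False from by decide,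
      show ((1:Fin 3) = 2) = False from by decide,
      show ((2:Fin 3) = 0) = False from by decide,
      show ((2:Fin 3) = 1) = False from by decide]
    show _ = pd 0 (fun b => tder x b 0 1) a - pd 1 (fun b => tder x b 0 0) a
    rw [hpdW0 0 1, hpdW0 1 0]
    ring
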